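/- arXiv:1809.01735 — 10 statements merged into one kernel-verified Lean document; each statement's English description precedes it below -/
import Mathlib

section
/- Multiplicative decomposition theorem (existence): if a g-valued formal distribution a in two variables is q-local with respect to a finite set T ⊂ ℤ, then there exist one-variable g-valued formal distributions c_k, k ∈ T, such that a = ∑_{k∈T} c_k(w)δ(z/q^k w); explicitly, a_{m,n} = ∑_{k∈T} q^{−km}·(c_k)_{m+n} for all m, n ∈ ℤ. -/
/-- Multiplication of a `g`-valued formal distribution in two variables by `(z - q^k w)`:
the `(m,n)`-coefficient of the result is `b_{m-1,n} - q^k • b_{m,n-1}`. -/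
noncomputable def qMul {F : Type*} [Field F] {g : Type*} [AddCommGroup g] [Module F g]
    (q : F) (k : ℤ) (b : ℤ → ℤ → g) : ℤ → ℤ → g :=
  fun m n => b (m - 1) n - q ^ k • b m (n - 1)

/-!
Multiplication by `z - q^j w` sends `c(w) δ(z/q^k w)` to `(q^k - q^j) w c(w) δ(z/q^k w)`, and its
kernel consists exactly of the distributions `c(w) δ(z/q^j w)`. So if `a` is `q`-local with
respect to `k :: T`, the product over `T` applied to `a` is some `b(w) δ(z/q^k w)`; as the
`q^k - q^j` (`j ∈ T`) are nonzero when `q` is not a root of unity, `b` can be divided by their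
product and shifted back, giving `c_k` with `a - c_k(w) δ(z/q^k w)` local with respect to `T`.
Induction on `T` finishes the proof.
-/

section

variable {F : Type*} [Field F] {g : Type*} [AddCommGroup g] [Module F g]

/-- The distribution `c(w) δ(z/q^k w)`. -/
noncomputable def deltaDist (q : F) (k : ℤ) (c : ℤ → g) : ℤ → ℤ → g :=
  fun m n => q ^ (-(k * m)) • c (m + n)

lemma qMul_sub (q : F) (k : ℤ) (a b : ℤ → ℤ → g) :
    qMul q k (a - b) = qMul q k a - qMul q k b := by
  funext m n
  simp only [qMul, Pi.sub_apply, smul_sub]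
  abel

lemma foldr_qMul_sub (q : F) (T : List ℤ) (a b : ℤ → ℤ → g) :
    T.foldr (qMul q) (a - b) = T.foldr (qMul q) a - T.foldr (qMul q) b := by
  induction T with
  | nil => rfl
  | cons k T ih => simp only [List.foldr_cons, ih, qMul_sub]

lemma eq_deltaDist_of_qMul_eq_zero {q : F} (hq : q ≠ 0) {k : ℤ} {b : ℤ → ℤ → g}
    (h : qMul q k b = 0) : b = deltaDist q k (b 0) := by
  have hrel : ∀ m n, b (m - 1) n = q ^ k • b m (n - 1) := fun m n =>
    sub_eq_zero.mp (congrFun (congrFun h m) n)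
  funext m n
  induction m using Int.induction_on generalizing n with
  | zero => simp [deltaDist]
  | succ m ih =>
    have hstep : b (m + 1) n = q ^ (-k) • b m (n + 1) := by
      rw [← add_sub_cancel_right (m : ℤ) 1, hrel, smul_smul, ← zpow_add₀ hq]
      simp
    rw [hstep, ih, deltaDist, deltaDist, smul_smul, ← zpow_add₀ hq]
    congr 2 <;> ring
  | pred m ih =>
    rw [hrel, ih, deltaDist, deltaDist, smul_smul, ← zpow_add₀ hq]
    congr 2 <;> ring

lemma qMul_deltaDist {q : F} (hq : q ≠ 0) (k j : ℤ) (c : ℤ → g) :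
    qMul q j (deltaDist q k c) = deltaDist q k fun s => (q ^ k - q ^ j) • c (s - 1) := by
  funext m n
  simp only [qMul, deltaDist, sub_smul, smul_sub, smul_smul]
  rw [show m - 1 + n = m + n - 1 by ring, show m + (n - 1) = m + n - 1 by ring,
    show -(k * (m - 1)) = -(k * m) + k by ring, zpow_add₀ hq, mul_comm (q ^ j)]

lemma foldr_qMul_deltaDist {q : F} (hq : q ≠ 0) (k : ℤ) (T : List ℤ) (c : ℤ → g) :
    T.foldr (qMul q) (deltaDist q k c) =
      deltaDist q k fun s => (T.map fun j => q ^ k - q ^ j).prod • c (s - T.length) := by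
  induction T with
  | nil => simp
  | cons j T ih =>
    rw [List.foldr_cons, ih, qMul_deltaDist hq]
    funext m n
    simp only [deltaDist, List.map_cons, List.prod_cons, List.length_cons, smul_smul,
      Nat.cast_succ, sub_add_eq_sub_sub_swap]

lemma prod_zpow_sub_zpow_ne_zero {q : F} (hq : q ≠ 0) (hqroot : ∀ n : ℤ, n ≠ 0 → q ^ n ≠ 1)
    {k : ℤ} {T : List ℤ} (hk : k ∉ T) : (T.map fun j => q ^ k - q ^ j).prod ≠ 0 := by
  refine List.prod_ne_zero fun hmem => ?_
  obtain ⟨j, hj, hkj⟩ := List.mem_map.mp hmem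
  refine hqroot (k - j) (sub_ne_zero.mpr (ne_of_mem_of_not_mem hj hk).symm) ?_
  rw [zpow_sub₀ hq, sub_eq_zero.mp hkj, div_self (zpow_ne_zero _ hq)]

lemma exists_foldr_qMul_sub_deltaDist_eq_zero {q : F} (hq : q ≠ 0)
    (hqroot : ∀ n : ℤ, n ≠ 0 → q ^ n ≠ 1) {k : ℤ} {T : List ℤ} (hk : k ∉ T)
    {a : ℤ → ℤ → g} (hlocal : (k :: T).foldr (qMul q) a = 0) :
    ∃ c : ℤ → g, T.foldr (qMul q) (a - deltaDist q k c) = 0 := by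
  have hμ := prod_zpow_sub_zpow_ne_zero hq hqroot hk
  refine ⟨fun s => (T.map fun j => q ^ k - q ^ j).prod⁻¹ • T.foldr (qMul q) a 0 (s + T.length), ?_⟩
  rw [foldr_qMul_sub, foldr_qMul_deltaDist hq, sub_eq_zero]
  conv_lhs => rw [eq_deltaDist_of_qMul_eq_zero hq hlocal]
  simp only [smul_smul, mul_inv_cancel₀ hμ, one_smul, sub_add_cancel]

lemma exists_eq_sum_deltaDist {q : F} (hq : q ≠ 0) (hqroot : ∀ n : ℤ, n ≠ 0 → q ^ n ≠ 1)
    {T : List ℤ} (hT : T.Nodup) {a : ℤ → ℤ → g} (hlocal : T.foldr (qMul q) a = 0) :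
    ∃ c : ℤ → ℤ → g, a = ∑ k ∈ T.toFinset, deltaDist q k (c k) := by
  induction T generalizing a with
  | nil => exact ⟨0, hlocal⟩
  | cons k T ih =>
    obtain ⟨hk, hT⟩ := List.nodup_cons.mp hT
    obtain ⟨ck, hck⟩ := exists_foldr_qMul_sub_deltaDist_eq_zero hq hqroot hk hlocal
    obtain ⟨c, hc⟩ := ih hT hck
    refine ⟨Function.update c k ck, ?_⟩
    have hkT : k ∉ T.toFinset := List.mem_toFinset.not.mpr hk
    rw [List.toFinset_cons, Finset.sum_insert hkT, Function.update_self,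
      Finset.sum_congr rfl fun j hj => by rw [Function.update_of_ne (ne_of_mem_of_not_mem hj hkT)],
      ← hc, add_sub_cancel]

end

theorem stmt_2_general (F : Type*) [Field F] (q : F) (hq : q ≠ 0)
    (hqroot : ∀ n : ℤ, n ≠ 0 → q ^ n ≠ 1)
    (g : Type*) [AddCommGroup g] [Module F g]
    (a : ℤ → ℤ → g) (T : List ℤ) (hT : T.Nodup)
    (hlocal : T.foldr (qMul q) a = 0) :
    ∃ c : ℤ → ℤ → g, ∀ m n : ℤ,
      a m n = ∑ k ∈ T.toFinset, q ^ (-(k * m)) • c k (m + n) := by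
  obtain ⟨c, hc⟩ := exists_eq_sum_deltaDist hq hqroot hT hlocal
  refine ⟨c, fun m n => ?_⟩
  rw [hc, Finset.sum_apply, Finset.sum_apply]
  rfl

/-- multiplicative decomposition theorem (existence).  If a `g`-valued formal
distribution `a` in two variables is `q`-local with respect to a finite set `T ⊂ ℤ`
(here represented by a duplicate-free list: applying successively the multiplications by
`(z - q^k w)` for all `k ∈ T` yields `0`), then there are one-variable distributions `c_k`,
`k ∈ T`, with `a = ∑_{k∈T} c_k(w) δ(z/q^k w)`, i.e.
`a_{m,n} = ∑_{k∈T} q^{-km} • (c_k)_{m+n}` for all `m, n ∈ ℤ`. -/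
theorem stmt_2 (F : Type*) [Field F] [CharZero F] (q : F) (hq : q ≠ 0)
    (hqroot : ∀ n : ℤ, n ≠ 0 → q ^ n ≠ 1)
    (g : Type*) [AddCommGroup g] [Module F g]
    (a : ℤ → ℤ → g) (T : List ℤ) (hT : T.Nodup)
    (hlocal : T.foldr (qMul q) a = 0) :
    ∃ c : ℤ → ℤ → g, ∀ m n : ℤ,
      a m n = ∑ k ∈ T.toFinset, q ^ (-(k * m)) • c k (m + n) :=
  stmt_2_general F q hq hqroot g a T hT hlocal
end

section
/- Multiplicative decomposition theorem (uniqueness and coefficient formula): (1) if A ⊂ ℤ is finite and c_k (k ∈ A) are one-variable g-valued formal distributions with ∑_{k∈A} c_k(w)δ(z/q^k w) = 0, i.e. ∑_{k∈A} q^{−km}·(c_k)_{m+n} = 0 for all m, n ∈ ℤ, then c_k = 0 for all k ∈ A. (2) If a = ∑_{k∈T} c_k(w)δ(z/q^k w) for a finite set T ⊂ ℤ, then for every n ∈ T the distribution c_n is recovered by c_n(w) = Res_z( ∏_{i∈T∖{n}} (z − q^i w)/((q^n − q^i)w) · a(z,w) ): explicitly, (c_n)_j = (∏_{i∈T∖{n}}(q^n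 − q^i))^{−1} · b_{0, j+|T∖{n}|} for all j ∈ ℤ, where b is the distribution obtained from a by successively applying multiplication by (z − q^i w) for each i ∈ T∖{n}. -/
section Aux

variable {F : Type*} [Field F] {g : Type*} [AddCommGroup g] [Module F g]

/-- Linear independence of geometric sequences with distinct nonzero ratios. -/
lemma indep_aux (A : Finset ℤ) : ∀ (x : ℤ → F) (v : ℤ → g),
    (∀ i ∈ A, x i ≠ 0) → (Set.InjOn x A) →
    (∀ m : ℤ, ∑ k ∈ A, x k ^ m • v k = 0) → ∀ k ∈ A, v k = 0 := by
  induction A using Finset.induction_on with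
  | empty => simp
  | @insert k0 s hk0 ih =>
    intro x v hx0 hinj hrel k hk
    have hs0 : ∀ i ∈ s, x i ≠ 0 := fun i hi => hx0 i (Finset.mem_insert_of_mem hi)
    have hinjs : Set.InjOn x s := hinj.mono (by intro y hy; exact Finset.mem_insert_of_mem hy)
    have key : ∀ k ∈ s, (x k - x k0) • v k = 0 := by
      refine ih x (fun k => (x k - x k0) • v k) hs0 hinjs ?_
      intro m
      have h1 := hrel (m + 1)
      have h2 := hrel m
      have hc : ∀ k ∈ insert k0 s,
          x k ^ m • ((x k - x k0) • v k) = x k ^ (m+1) • v k - x k0 • x k ^ m • v k := by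
        intro k hk
        rw [zpow_add_one₀ (hx0 k hk), smul_smul, smul_smul, ← sub_smul]
        congr 1; ring
      have hsum : ∑ k ∈ insert k0 s, x k ^ m • ((x k - x k0) • v k) = 0 := by
        rw [Finset.sum_congr rfl hc, Finset.sum_sub_distrib, h1, ← Finset.smul_sum, h2,
          smul_zero, sub_zero]
      rw [Finset.sum_insert hk0] at hsum
      simpa using hsum
    have hvs : ∀ k ∈ s, v k = 0 := by
      intro k hks
      have hne : x k - x k0 ≠ 0 := by
        refine sub_ne_zero.mpr (fun h => hk0 ?_)
        have := hinj (Finset.mem_insert_of_mem hks) (Finset.mem_insert_self k0 s) h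
        rwa [← this]
      rcases smul_eq_zero.mp (key k hks) with h | h
      · exact absurd h hne
      · exact h
    rcases Finset.mem_insert.mp hk with rfl | hks
    · have h0 := hrel 0
      rw [Finset.sum_insert hk0] at h0
      simp only [zpow_zero, one_smul] at h0
      rwa [Finset.sum_eq_zero (fun k hks => by simp [hvs k hks]), add_zero] at h0
    · exact hvs k hks

lemma qpow_inj {q : F} (hq : q ≠ 0) (hqroot : ∀ n : ℤ, n ≠ 0 → q ^ n ≠ 1)
    {k l : ℤ} (h : q ^ k = q ^ l) : k = l := by
  by_contra hne
  refine hqroot (k - l) (sub_ne_zero.mpr hne) ?_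
  rw [zpow_sub₀ hq, h, div_self (zpow_ne_zero _ hq)]

lemma fold_eq {q : F} (hq : q ≠ 0) (S : Finset ℤ) (c : ℤ → ℤ → g) (a : ℤ → ℤ → g)
    (ha : ∀ m n : ℤ, a m n = ∑ k ∈ S, q ^ (-(k*m)) • c k (m+n)) :
    ∀ (L : List ℤ) (m n : ℤ), (L.foldr (qMul q) a) m n
      = ∑ k ∈ S, q ^ (-(k*m)) •
          ((L.map (fun i => q ^ k - q ^ i)).prod • c k (m + n - L.length)) := by
  intro L
  induction L with
  | nil => intro m n; simp [ha]
  | cons i L ih =>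
    intro m n
    have hfold : (i :: L).foldr (qMul q) a = qMul q i (L.foldr (qMul q) a) := rfl
    rw [hfold]
    show (L.foldr (qMul q) a) (m-1) n - q ^ i • (L.foldr (qMul q) a) m (n-1) = _
    rw [ih, ih, Finset.smul_sum, ← Finset.sum_sub_distrib]
    refine Finset.sum_congr rfl (fun k _ => ?_)
    have e1 : m - 1 + n - (L.length : ℤ) = m + n - ((i :: L).length : ℤ) := by
      push_cast [List.length_cons]; ring
    have e2 : m + (n - 1) - (L.length : ℤ) = m + n - ((i :: L).length : ℤ) := by
      push_cast [List.length_cons]; ring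
    rw [e1, e2]
    have hz : q ^ (-(k*(m-1))) = q ^ (-(k*m)) * q ^ k := by
      rw [← zpow_add₀ hq]; congr 1; ring
    rw [hz, List.map_cons, List.prod_cons]
    simp only [smul_smul]
    rw [← sub_smul]
    congr 1; ring

end Aux

/-- multiplicative decomposition theorem (uniqueness and coefficient formula).
(1) If `∑_{k∈A} c_k(w) δ(z/q^k w) = 0`, i.e. `∑_{k∈A} q^{-km} • (c_k)_{m+n} = 0` for all
`m, n ∈ ℤ`, then `c_k = 0` for all `k ∈ A`.
(2) If `a = ∑_{k∈T} c_k(w) δ(z/q^k w)` for a finite `T ⊂ ℤ` (a duplicate-free list), then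
for every `n ∈ T` and `j ∈ ℤ`,
`(c_n)_j = (∏_{i∈T∖{n}} (q^n - q^i))⁻¹ • b_{0, j+|T∖{n}|}`, where `b` is obtained from `a`
by successively applying the multiplications by `(z - q^i w)` for each `i ∈ T∖{n}`. -/
theorem stmt_3 (F : Type*) [Field F] [CharZero F] (q : F) (hq : q ≠ 0)
    (hqroot : ∀ n : ℤ, n ≠ 0 → q ^ n ≠ 1)
    (g : Type*) [AddCommGroup g] [Module F g] :
    (∀ (A : Finset ℤ) (c : ℤ → ℤ → g),
        (∀ m n : ℤ, ∑ k ∈ A, q ^ (-(k * m)) • c k (m + n) = 0) →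
        ∀ k ∈ A, ∀ j : ℤ, c k j = 0)
    ∧
    (∀ (T : List ℤ), T.Nodup → ∀ (a c : ℤ → ℤ → g),
        (∀ m n : ℤ, a m n = ∑ k ∈ T.toFinset, q ^ (-(k * m)) • c k (m + n)) →
        ∀ n ∈ T, ∀ j : ℤ,
          c n j = (∏ i ∈ T.toFinset.erase n, (q ^ n - q ^ i))⁻¹ •
            ((T.erase n).foldr (qMul q) a) 0 (j + ((T.erase n).length : ℤ))) := by
  constructor
  · -- Part (1)
    intro A c h k hk j
    refine indep_aux A (fun k => q ^ (-k)) (fun k => c k j)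
      (fun i _ => zpow_ne_zero _ hq)
      (fun k1 _ k2 _ hx => by
        have := qpow_inj hq hqroot hx; omega) ?_ k hk
    intro m
    have := h m (j - m)
    rw [← this]
    refine Finset.sum_congr rfl (fun k _ => ?_)
    rw [show m + (j - m) = j by ring]
    congr 1
    rw [← zpow_mul]
    congr 1; ring
  · -- Part (2)
    intro T hT a c ha n hn j
    set L : List ℤ := T.erase n with hL
    have hb := fold_eq hq T.toFinset c a ha L 0 (j + (L.length : ℤ))
    have harg : (0 : ℤ) + (j + (L.length : ℤ)) - (L.length : ℤ) = j := by ring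
    rw [harg] at hb
    have hzero : ∀ k ∈ T.toFinset, k ≠ n →
        q ^ (-(k*(0:ℤ))) • ((L.map (fun i => q ^ k - q ^ i)).prod • c k j) = 0 := by
      intro k hkT hkn
      have hkL : k ∈ L := by
        rw [hL, List.mem_erase_of_ne hkn]
        exact List.mem_toFinset.mp hkT
      have : (L.map (fun i => q ^ k - q ^ i)).prod = 0 :=
        List.prod_eq_zero (List.mem_map.mpr ⟨k, hkL, by ring⟩)
      simp [this]
    have hnT : n ∈ T.toFinset := List.mem_toFinset.mpr hn
    have hsingle : ((L.foldr (qMul q) a) 0 (j + (L.length : ℤ)))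
        = (L.map (fun i => q ^ n - q ^ i)).prod • c n j := by
      rw [hb, Finset.sum_eq_single n hzero (fun h => absurd hnT h)]
      simp
    have hLnodup : L.Nodup := hT.erase n
    have htf : L.toFinset = T.toFinset.erase n := by
      ext x
      simp [hL, hT.mem_erase_iff, and_comm]
    have hprod : (∏ i ∈ T.toFinset.erase n, (q ^ n - q ^ i))
        = (L.map (fun i => q ^ n - q ^ i)).prod := by
      rw [← htf, List.prod_toFinset _ hLnodup]
    have hPne : (∏ i ∈ T.toFinset.erase n, (q ^ n - q ^ i)) ≠ 0 := by
      refine Finset.prod_ne_zero_iff.mpr (fun i hi => sub_ne_zero.mpr (fun h => ?_))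
      have := qpow_inj hq hqroot h
      exact (Finset.mem_erase.mp hi).1 this.symm
    rw [hsingle, ← hprod, inv_smul_smul₀ hPne]
end

section
/- Every local lattice Lie algebra carries the structure of a multiplicative Lie conformal algebra: let (g, S) be a local lattice Lie algebra over a field F, and define the multiplicative λ-bracket {a_λ b} := ∑_{n∈ℤ} ⁅Sⁿa, b⁆ λⁿ (a Laurent polynomial in λ with coefficients in g, by locality). Then this λ-bracket satisfies, coefficientwise: (sesquilinearity) ⁅Sⁿ(S(a)), b⁆ = ⁅S^{n+1}a, b⁆ and ⁅Sⁿa, S(b)⁆ = S(⁅S^{n−1}a, b⁆) for all n ∈ ℤ; (skewsymmetry) ⁅Sⁿa, b⁆ = −Sⁿ(⁅S^{−n}b, a⁆) for all n ∈ ℤ; (Jacobi identity) ⁅S^m a, ⁅Sⁿb, c⁆⁆ − ⁅Sⁿb, ⁅S^m a, c⁆⁆ = ⁅Sⁿ(⁅S^{m−n}a, b⁆), c⁆ for all m, n ∈ ℤ and all a, b, c ∈ g. -/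
/-! Bracket-preserving linear automorphisms form a subgroup, so every integer power `Sⁿ` is a Lie
automorphism. Moving `Sⁿ` across brackets then reduces each identity to skewsymmetry or the Jacobi
identity of `g`. -/

namespace LieAlgebra

variable (R L : Type*) [CommRing R] [LieRing L] [LieAlgebra R L]

def lieAutSubgroup : Subgroup (L ≃ₗ[R] L) where
  carrier := {e | ∀ a b : L, e ⁅a, b⁆ = ⁅e a, e b⁆}
  mul_mem' {e f} he hf a b := by
    change e (f _) = ⁅e (f a), e (f b)⁆
    rw [hf, he]
  one_mem' _ _ := rfl
  inv_mem' {e} he a b := e.injective <| by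
    change e (e.symm _) = e ⁅e.symm a, e.symm b⁆
    rw [he, e.apply_symm_apply, e.apply_symm_apply, e.apply_symm_apply]

variable {R L}

theorem zpow_apply_lie {S : L ≃ₗ[R] L} (hS : ∀ a b : L, S ⁅a, b⁆ = ⁅S a, S b⁆) (n : ℤ)
    (a b : L) : (S ^ n) ⁅a, b⁆ = ⁅(S ^ n) a, (S ^ n) b⁆ :=
  (lieAutSubgroup R L).zpow_mem hS n a b

end LieAlgebra

theorem LinearEquiv.zpow_apply_zpow_apply {R M : Type*} [Semiring R] [AddCommMonoid M]
    [Module R M] (S : M ≃ₗ[R] M) (m n : ℤ) (x : M) : (S ^ m) ((S ^ n) x) = (S ^ (m + n)) x := by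
  rw [zpow_add]
  rfl

theorem stmt_7_general (F : Type*) [Field F] (g : Type*) [LieRing g] [LieAlgebra F g]
    (S : g ≃ₗ[F] g) (hS : ∀ a b : g, S ⁅a, b⁆ = ⁅S a, S b⁆) :
    (∀ (n : ℤ) (a b : g), ⁅(S ^ n) (S a), b⁆ = ⁅(S ^ (n + 1)) a, b⁆)
    ∧ (∀ (n : ℤ) (a b : g), ⁅(S ^ n) a, S b⁆ = S ⁅(S ^ (n - 1)) a, b⁆)
    ∧ (∀ (n : ℤ) (a b : g), ⁅(S ^ n) a, b⁆ = -((S ^ n) ⁅(S ^ (-n)) b, a⁆))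
    ∧ (∀ (m n : ℤ) (a b c : g),
        ⁅(S ^ m) a, ⁅(S ^ n) b, c⁆⁆ - ⁅(S ^ n) b, ⁅(S ^ m) a, c⁆⁆
          = ⁅(S ^ n) ⁅(S ^ (m - n)) a, b⁆, c⁆) := by
  have hS_zpow_one : ∀ x : g, S x = (S ^ (1 : ℤ)) x := by simp
  refine ⟨fun n a b => ?_, fun n a b => ?_, fun n a b => ?_, fun m n a b c => ?_⟩
  · rw [hS_zpow_one a, S.zpow_apply_zpow_apply]
  · rw [hS, hS_zpow_one ((S ^ (n - 1)) a), S.zpow_apply_zpow_apply, add_sub_cancel]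
  · rw [LieAlgebra.zpow_apply_lie hS, S.zpow_apply_zpow_apply, add_neg_cancel, zpow_zero,
      ← lie_skew]
    rfl
  · rw [LieAlgebra.zpow_apply_lie hS, S.zpow_apply_zpow_apply, add_sub_cancel, lie_lie]

/-- every local lattice Lie algebra carries the structure of a multiplicative
Lie conformal algebra.  Let `(g, S)` be a local lattice Lie algebra over `F` (a Lie algebra
`g` with a Lie algebra automorphism `S` such that `⁅Sⁿa, b⁆ = 0` for all but finitely many
`n ∈ ℤ`).  The λ-bracket `{a_λ b} = ∑_n ⁅Sⁿa,b⁆ λⁿ` satisfies, coefficientwise: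
sesquilinearity, skewsymmetry and the Jacobi identity. -/
theorem stmt_7 (F : Type*) [Field F] (g : Type*) [LieRing g] [LieAlgebra F g]
    (S : g ≃ₗ[F] g) (hS : ∀ a b : g, S ⁅a, b⁆ = ⁅S a, S b⁆)
    (hloc : ∀ a b : g, {n : ℤ | ⁅(S ^ n) a, b⁆ ≠ 0}.Finite) :
    (∀ (n : ℤ) (a b : g), ⁅(S ^ n) (S a), b⁆ = ⁅(S ^ (n + 1)) a, b⁆)
    ∧ (∀ (n : ℤ) (a b : g), ⁅(S ^ n) a, S b⁆ = S ⁅(S ^ (n - 1)) a, b⁆)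
    ∧ (∀ (n : ℤ) (a b : g), ⁅(S ^ n) a, b⁆ = -((S ^ n) ⁅(S ^ (-n)) b, a⁆))
    ∧ (∀ (m n : ℤ) (a b c : g),
        ⁅(S ^ m) a, ⁅(S ^ n) b, c⁆⁆ - ⁅(S ^ n) b, ⁅(S ^ m) a, c⁆⁆
          = ⁅(S ^ n) ⁅(S ^ (m - n)) a, b⁆, c⁆) :=
  stmt_7_general F g S hS
end

section
/- Key Lemma (local lattice form): let (g, S) be a local lattice Lie algebra over a field F and set B(a,b) := ∑_{n∈ℤ} ⁅Sⁿa, b⁆ (a finite sum). Then for all a, b, c ∈ g: (1) B(S(a) − a, b) = 0; (2) B(a, S(b) − b) ∈ (S − id)(g); (3) B(a,b) + B(b,a) ∈ (S − id)(g); (4) B(a, S(b)) = S(B(a,b)); (5) B(a, B(b,c)) − B(b, B(a,c)) = B(B(a,b), c). Consequently B induces a well-defined Lie algebra bracket {∫a, ∫b} := ∫B(a,b) on the quotient g/(S − id)(g), and a representation of this Lie algebra on g commuting with S. -/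
/-! Because `S` is an automorphism, `B` is unchanged by shifting the summation index, so
`B(Sᵏa, b) = B(a, b)` and `Sᵏ (B(a, b)) = B(Sᵏa, Sᵏb) = B(a, Sᵏb)`; this gives (1) and (4), and (2)
follows from (4). Each `ad (Sⁿa)` is a derivation, hence so is the finite sum `B(a, ·)`; applying it
to `B(b, c) = ∑ₘ ⁅Sᵐb, c⁆` and using `B(a, Sᵐb) = Sᵐ (B(a, b))` gives (5). For (3), substituting
`n ↦ -m` and using skew-symmetry gives `B(a, b) + B(b, a) = ∑ₘ (cₘ - Sᵐcₘ)` with `cₘ = ⁅S⁻ᵐa, b⁆`,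
and every `c - Sᵐc` lies in the image of `S - 1`. -/

/-- For a lattice Lie algebra `(g, S)`, the (finite, by locality) sum
`B(a,b) = ∑_{n∈ℤ} ⁅Sⁿa, b⁆`. -/
noncomputable def latticeB {F : Type*} [Field F] {g : Type*} [LieRing g] [LieAlgebra F g]
    (S : g ≃ₗ[F] g) (a b : g) : g :=
  ∑ᶠ n : ℤ, ⁅(S ^ n) a, b⁆

open Function

section LieRingModule

variable {ι L M : Type*} [LieRing L] [AddCommGroup M] [LieRingModule L M]

theorem lie_finsum (x : L) {f : ι → M} (hf : f.HasFiniteSupport) :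
    ⁅x, ∑ᶠ i, f i⁆ = ∑ᶠ i, ⁅x, f i⁆ :=
  (AddMonoidHom.mk' (fun m : M => ⁅x, m⁆) (lie_add x)).map_finsum hf

theorem finsum_lie {f : ι → L} (hf : f.HasFiniteSupport) (m : M) :
    ⁅∑ᶠ i, f i, m⁆ = ∑ᶠ i, ⁅f i, m⁆ :=
  (AddMonoidHom.mk' (fun x : L => ⁅x, m⁆) (fun x y => add_lie x y m)).map_finsum hf

end LieRingModule

namespace LinearEquiv

theorem zpow_add_apply {R M : Type*} [Semiring R] [AddCommMonoid M] [Module R M]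
    (S : M ≃ₗ[R] M) (m n : ℤ) (x : M) : (S ^ (m + n)) x = (S ^ m) ((S ^ n) x) := by
  rw [zpow_add, mul_apply]

variable {R M : Type*} [Ring R] [AddCommGroup M] [Module R M] (S : M ≃ₗ[R] M)

theorem sub_zpow_apply_mem_range (m : ℤ) (x : M) :
    x - (S ^ m) x ∈ LinearMap.range ((S : M →ₗ[R] M) - LinearMap.id) := by
  have hstep (y : M) : S y - y ∈ LinearMap.range ((S : M →ₗ[R] M) - LinearMap.id) := ⟨y, rfl⟩
  induction m using Int.induction_on with
  | zero => simp
  | succ k ih =>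
    rw [add_comm, zpow_add_apply, zpow_one, ← sub_add_sub_cancel x ((S ^ (k : ℤ)) x)]
    simpa using add_mem ih (neg_mem (hstep ((S ^ (k : ℤ)) x)))
  | pred k ih =>
    set y := (S ^ (-(k : ℤ) - 1)) x
    have hy : S y = (S ^ (-(k : ℤ))) x := by
      simpa using (S.zpow_add_apply 1 (-(k : ℤ) - 1) x).symm
    rw [show x - y = (x - (S ^ (-(k : ℤ))) x) + (S y - y) by rw [hy]; abel]
    exact add_mem ih (hstep y)

end LinearEquiv

section LatticeB

variable {F g : Type*} [Field F] [LieRing g] [LieAlgebra F g] (S : g ≃ₗ[F] g)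

theorem zpow_apply_lie (hS : ∀ a b : g, S ⁅a, b⁆ = ⁅S a, S b⁆) (n : ℤ) (a b : g) :
    (S ^ n) ⁅a, b⁆ = ⁅(S ^ n) a, (S ^ n) b⁆ := by
  have hSsymm (a b : g) : S.symm ⁅a, b⁆ = ⁅S.symm a, S.symm b⁆ :=
    S.injective (by simp [hS])
  induction n using Int.induction_on with
  | zero => simp
  | succ k ih => simp only [add_comm _ (1 : ℤ), S.zpow_add_apply, zpow_one, ih, hS]
  | pred k ih =>
    simp only [sub_eq_neg_add, S.zpow_add_apply, zpow_neg_one, ih]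
    exact hSsymm _ _

theorem latticeB_zpow_left (k : ℤ) (a b : g) : latticeB S ((S ^ k) a) b = latticeB S a b := by
  simp only [latticeB, ← S.zpow_add_apply]
  exact finsum_comp_equiv (Equiv.addRight k) (f := fun n => ⁅(S ^ n) a, b⁆)

theorem zpow_apply_latticeB (hS : ∀ a b : g, S ⁅a, b⁆ = ⁅S a, S b⁆) (k : ℤ) (a b : g) :
    (S ^ k) (latticeB S a b) = latticeB S a ((S ^ k) b) := by
  rw [← latticeB_zpow_left S k a ((S ^ k) b), latticeB, latticeB, AddEquivClass.map_finsum]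
  simp only [zpow_apply_lie S hS, ← S.zpow_add_apply, add_comm k]

theorem latticeB_sub_left (hloc : ∀ a b : g, {n : ℤ | ⁅(S ^ n) a, b⁆ ≠ 0}.Finite) (x y b : g) :
    latticeB S (x - y) b = latticeB S x b - latticeB S y b := by
  simp only [latticeB, map_sub, sub_lie]
  exact finsum_sub_distrib (hloc x b) (hloc y b)

theorem latticeB_add_right (hloc : ∀ a b : g, {n : ℤ | ⁅(S ^ n) a, b⁆ ≠ 0}.Finite) (a x y : g) :
    latticeB S a (x + y) = latticeB S a x + latticeB S a y := by
  simp only [latticeB, lie_add]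
  exact finsum_add_distrib (hloc a x) (hloc a y)

theorem latticeB_sub_right (hloc : ∀ a b : g, {n : ℤ | ⁅(S ^ n) a, b⁆ ≠ 0}.Finite) (a x y : g) :
    latticeB S a (x - y) = latticeB S a x - latticeB S a y := by
  simp only [latticeB, lie_sub]
  exact finsum_sub_distrib (hloc a x) (hloc a y)

theorem latticeB_finsum_right (hloc : ∀ a b : g, {n : ℤ | ⁅(S ^ n) a, b⁆ ≠ 0}.Finite)
    {ι : Type*} (a : g) {f : ι → g} (hf : f.HasFiniteSupport) :
    latticeB S a (∑ᶠ i, f i) = ∑ᶠ i, latticeB S a (f i) :=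
  (AddMonoidHom.mk' (latticeB S a) (latticeB_add_right S hloc a)).map_finsum hf

theorem latticeB_lie (hloc : ∀ a b : g, {n : ℤ | ⁅(S ^ n) a, b⁆ ≠ 0}.Finite) (a y c : g) :
    latticeB S a ⁅y, c⁆ = ⁅latticeB S a y, c⁆ + ⁅y, latticeB S a c⁆ := by
  rw [latticeB, latticeB, latticeB, finsum_lie (hloc a y), lie_finsum _ (hloc a c),
    ← finsum_add_distrib (HasFiniteSupport.fun_comp (g := (⁅·, c⁆)) (hloc a y) (zero_lie c))
      (HasFiniteSupport.fun_comp (g := (⁅y, ·⁆)) (hloc a c) (lie_zero y))]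
  exact finsum_congr fun n => leibniz_lie _ _ _

theorem latticeB_latticeB (hS : ∀ a b : g, S ⁅a, b⁆ = ⁅S a, S b⁆)
    (hloc : ∀ a b : g, {n : ℤ | ⁅(S ^ n) a, b⁆ ≠ 0}.Finite) (a b c : g) :
    latticeB S a (latticeB S b c) = latticeB S (latticeB S a b) c + latticeB S b (latticeB S a c) :=
  calc latticeB S a (latticeB S b c) = ∑ᶠ m : ℤ, latticeB S a ⁅(S ^ m) b, c⁆ :=
        latticeB_finsum_right S hloc a (hloc b c)
    _ = ∑ᶠ m : ℤ, (⁅(S ^ m) (latticeB S a b), c⁆ + ⁅(S ^ m) b, latticeB S a c⁆) :=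
        finsum_congr fun m => by rw [latticeB_lie S hloc, zpow_apply_latticeB S hS]
    _ = latticeB S (latticeB S a b) c + latticeB S b (latticeB S a c) :=
        finsum_add_distrib (hloc _ c) (hloc b _)

theorem latticeB_add_latticeB_swap_mem_range (hS : ∀ a b : g, S ⁅a, b⁆ = ⁅S a, S b⁆)
    (hloc : ∀ a b : g, {n : ℤ | ⁅(S ^ n) a, b⁆ ≠ 0}.Finite) (a b : g) :
    latticeB S a b + latticeB S b a ∈ LinearMap.range ((S : g →ₗ[F] g) - LinearMap.id) := by
  set c : ℤ → g := fun m => ⁅(S ^ (-m)) a, b⁆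
  have hc : c.HasFiniteSupport := (hloc a b).preimage neg_injective.injOn
  have hab : latticeB S a b = ∑ᶠ m, c m :=
    (finsum_comp_equiv (Equiv.neg ℤ) (f := fun n => ⁅(S ^ n) a, b⁆)).symm
  have hba : latticeB S b a = ∑ᶠ m, -(S ^ m) (c m) := finsum_congr fun m => by
    rw [zpow_apply_lie S hS, ← S.zpow_add_apply, add_neg_cancel, zpow_zero, LinearEquiv.coe_one, id,
      lie_skew]
  have hc' : HasFiniteSupport fun m => -(S ^ m) (c m) :=
    hc.subset fun m hm hcm => hm (by simp [hcm])
  rw [hab, hba, ← finsum_add_distrib hc hc']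
  refine finsum_induction _ (zero_mem _) (fun _ _ => add_mem) fun m => ?_
  rw [← sub_eq_add_neg]
  exact S.sub_zpow_apply_mem_range m (c m)

end LatticeB

/-- Key Lemma (local lattice form).  For a local lattice Lie algebra `(g,S)`
and `B(a,b) = ∑_n ⁅Sⁿa,b⁆`:
(1) `B(S(a) − a, b) = 0`; (2) `B(a, S(b) − b) ∈ (S − id)(g)`;
(3) `B(a,b) + B(b,a) ∈ (S − id)(g)`; (4) `B(a, S(b)) = S(B(a,b))`;
(5) `B(a, B(b,c)) − B(b, B(a,c)) = B(B(a,b), c)`.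
(Consequently `B` induces a Lie bracket on `g/(S−id)(g)` and a representation on `g`
commuting with `S`.) -/
theorem stmt_8 (F : Type*) [Field F] (g : Type*) [LieRing g] [LieAlgebra F g]
    (S : g ≃ₗ[F] g) (hS : ∀ a b : g, S ⁅a, b⁆ = ⁅S a, S b⁆)
    (hloc : ∀ a b : g, {n : ℤ | ⁅(S ^ n) a, b⁆ ≠ 0}.Finite) :
    (∀ a b : g, latticeB S (S a - a) b = 0)
    ∧ (∀ a b : g, ∃ x : g, S x - x = latticeB S a (S b - b))
    ∧ (∀ a b : g, ∃ x : g, S x - x = latticeB S a b + latticeB S b a)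
    ∧ (∀ a b : g, latticeB S a (S b) = S (latticeB S a b))
    ∧ (∀ a b c : g,
        latticeB S a (latticeB S b c) - latticeB S b (latticeB S a c)
          = latticeB S (latticeB S a b) c) := by
  have latticeB_apply_right (a b : g) : latticeB S a (S b) = S (latticeB S a b) := by
    simpa using (zpow_apply_latticeB S hS 1 a b).symm
  refine ⟨fun a b => ?_, fun a b => ⟨latticeB S a b, ?_⟩, fun a b => ?_, latticeB_apply_right,
    fun a b c => ?_⟩
  · rw [latticeB_sub_left S hloc, ← latticeB_zpow_left S 1 a b, zpow_one, sub_self]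
  · rw [latticeB_sub_right S hloc, latticeB_apply_right]
  · simpa using latticeB_add_latticeB_swap_mem_range S hS hloc a b
  · rw [latticeB_latticeB S hS hloc, add_sub_cancel_right]
end

section
/- Affinization preserves the local lattice Lie algebra structure: let (g, S) be a local lattice Lie algebra over a field F, let A be a commutative associative unital F-algebra with an F-algebra automorphism σ, and equip the base change A ⊗_F g with its Lie algebra structure determined by ⁅f ⊗ a, h ⊗ b⁆ = (f·h) ⊗ ⁅a,b⁆. Then the F-linear map Σ := σ ⊗ S is a bijection of A ⊗_F g satisfying ⁅Σx, Σy⁆ = Σ⁅x,y⁆ for all x, y ∈ A ⊗_F g, and (A ⊗_F g, Σ) is again a local lattice Lie algebra: for all x, y ∈ A ⊗_F g, the set {n ∈ ℤ : ⁅Σⁿx, y⁆ ≠ 0} is finite. -/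
open scoped TensorProduct

private lemma sum_lie' {ι L : Type*} [LieRing L] (s : Finset ι) (f : ι → L) (y : L) :
    ⁅∑ i ∈ s, f i, y⁆ = ∑ i ∈ s, ⁅f i, y⁆ :=
  map_sum (AddMonoidHom.mk' (⁅·, y⁆) (fun a b => add_lie a b y)) f s

private lemma lie_sum' {ι L : Type*} [LieRing L] (s : Finset ι) (f : ι → L) (y : L) :
    ⁅y, ∑ i ∈ s, f i⁆ = ∑ i ∈ s, ⁅y, f i⁆ :=
  map_sum (AddMonoidHom.mk' (⁅y, ·⁆) (fun a b => lie_add y a b)) f s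

/-- affinization preserves the local lattice Lie algebra structure.  Let
`(g,S)` be a local lattice Lie algebra over `F`, `A` a commutative unital `F`-algebra with
an algebra automorphism `σ`, and equip `A ⊗[F] g` with the base-change Lie algebra
structure (`⁅f ⊗ a, h ⊗ b⁆ = (f·h) ⊗ ⁅a,b⁆`).  Then `Σ = σ ⊗ S` is a bijection of
`A ⊗[F] g` preserving the bracket, and `(A ⊗[F] g, Σ)` is again a local lattice Lie
algebra. -/
theorem stmt_9 (F : Type*) [Field F] (g : Type*) [LieRing g] [LieAlgebra F g]
    (S : g ≃ₗ[F] g) (hS : ∀ a b : g, S ⁅a, b⁆ = ⁅S a, S b⁆)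
    (hloc : ∀ a b : g, {n : ℤ | ⁅(S ^ n) a, b⁆ ≠ 0}.Finite)
    (A : Type*) [CommRing A] [Algebra F A] (σ : A ≃ₐ[F] A) :
    Function.Bijective (TensorProduct.map σ.toLinearMap (S : g →ₗ[F] g))
    ∧ (∀ x y : A ⊗[F] g,
        ⁅TensorProduct.map σ.toLinearMap (S : g →ₗ[F] g) x,
          TensorProduct.map σ.toLinearMap (S : g →ₗ[F] g) y⁆
          = TensorProduct.map σ.toLinearMap (S : g →ₗ[F] g) ⁅x, y⁆)
    ∧ (∀ x y : A ⊗[F] g,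
        {n : ℤ | ⁅((TensorProduct.congr σ.toLinearEquiv S) ^ n) x, y⁆ ≠ 0}.Finite) := by
  have hmap : TensorProduct.map σ.toLinearMap (S : g →ₗ[F] g)
      = (TensorProduct.congr σ.toLinearEquiv S).toLinearMap := rfl
  refine ⟨?_, ?_, ?_⟩
  · rw [hmap]
    exact (TensorProduct.congr σ.toLinearEquiv S).bijective
  · intro x y
    induction x using TensorProduct.induction_on with
    | zero => simp
    | tmul f a =>
      induction y using TensorProduct.induction_on with
      | zero => simp
      | tmul h b =>
        simp only [TensorProduct.map_tmul, LieAlgebra.ExtendScalars.bracket_tmul]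
        simp [hS]
      | add y₁ y₂ hy₁ hy₂ =>
        rw [map_add, lie_add, lie_add, map_add, hy₁, hy₂]
    | add x₁ x₂ hx₁ hx₂ =>
      rw [map_add, add_lie, add_lie, map_add, hx₁, hx₂]
  · intro x y
    obtain ⟨sx, hx⟩ := TensorProduct.exists_finset x
    obtain ⟨sy, hy⟩ := TensorProduct.exists_finset y
    apply Set.Finite.subset
      (Set.Finite.biUnion sx.finite_toSet fun p _ =>
        Set.Finite.biUnion sy.finite_toSet fun q _ => hloc p.2 q.2)
    intro n hn
    simp only [Set.mem_setOf_eq] at hn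
    by_contra hc
    apply hn
    simp only [Set.mem_iUnion, Set.mem_setOf_eq, Finset.mem_coe, not_exists] at hc
    rw [hx, hy, map_sum]
    rw [TensorProduct.congr_zpow]
    rw [sum_lie']
    refine Finset.sum_eq_zero fun p hp => ?_
    rw [lie_sum']
    refine Finset.sum_eq_zero fun q hq => ?_
    rw [TensorProduct.congr_tmul, LieAlgebra.ExtendScalars.bracket_tmul]
    have : ⁅(S ^ n) p.2, q.2⁆ = 0 := by
      by_contra h
      exact hc p hp q hq h
    rw [this, TensorProduct.tmul_zero]
end

section
/- Lenard–Magri extension lemma: let F be a field of characteristic 0, V a commutative associative unital F-algebra with an F-algebra automorphism S, D : V → V any map, and define H : V → V by H(f) := S(D(f)) + D(f) (i.e. H = (S+1)∘D). Assume H is skewadjoint in the sense that f·H(h) + h·H(f) ∈ (S − id)(V) for all f, h ∈ V. If n ≥ 1 and ξ₀, ξ₁, …, ξ_{n−1} ∈ V satisfy ξ₀ = 1/2 (the inverse of 2 in V) and S(ξ_j) − S^{−1}(ξ_j) = H(ξ_{j−1}) for all 1 ≤ j ≤ n−1, then there exists ξ_n ∈ V with S(ξ_n) − S^{−1}(ξ_n)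 = H(ξ_{n−1}). -/
/-- Lenard–Magri extension lemma.  Let `V` be a commutative associative
unital `F`-algebra (char `F = 0`) with automorphism `S`, `D : V → V` any map, and
`H = (S+1)∘D`, i.e. `H(f) = S(D(f)) + D(f)`.  Assume `H` is skewadjoint:
`f·H(h) + h·H(f) ∈ (S − id)(V)` for all `f,h`.  If `ξ₀ = 1/2` and
`S(ξ_j) − S⁻¹(ξ_j) = H(ξ_{j−1})` for `1 ≤ j ≤ n−1` (with `n ≥ 1`), then there exists
`ξ_n` with `S(ξ_n) − S⁻¹(ξ_n) = H(ξ_{n−1})`. -/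
theorem stmt_11 (F : Type*) [Field F] [CharZero F]
    (V : Type*) [CommRing V] [Algebra F V]
    (S : V ≃ₐ[F] V) (D : V → V)
    (H : V → V) (hH : ∀ f : V, H f = S (D f) + D f)
    (skew : ∀ f h : V, ∃ v : V, S v - v = f * H h + h * H f)
    (n : ℕ) (hn : 1 ≤ n) (ξ : ℕ → V)
    (hξ0 : ξ 0 = algebraMap F V (1 / 2))
    (hrec : ∀ j : ℕ, 1 ≤ j → j ≤ n - 1 → S (ξ j) - S.symm (ξ j) = H (ξ (j - 1))) :
    ∃ ξn : V, S ξn - S.symm ξn = H (ξ (n - 1)) := by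
  set m := n - 1 with hm
  set p : ℕ → ℕ → V := fun i j => (ξ i + S.symm (ξ i)) * D (ξ j) with hp
  have L1 : ∀ a b : V, S (S.symm a * b) - (S.symm a * b) = a * S b - S.symm a * b := by
    intro a b
    rw [map_mul, S.apply_symm_apply]
  have skew' : ∀ i j : ℕ, ∃ v : V, S v - v = p i j + p j i := by
    intro i j
    obtain ⟨v0, h0⟩ := skew (ξ i) (ξ j)
    refine ⟨v0 - S.symm (ξ i) * D (ξ j) - S.symm (ξ j) * D (ξ i), ?_⟩
    have h1 := L1 (ξ i) (D (ξ j))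
    have h2 := L1 (ξ j) (D (ξ i))
    rw [hH (ξ i), hH (ξ j)] at h0
    simp only [map_sub, hp]
    linear_combination h0 - h1 - h2
  have step : ∀ i j : ℕ, i + 1 ≤ m → 1 ≤ j → j ≤ m →
      ∃ v : V, S v - v = p i j - p (i + 1) (j - 1) := by
    intro i j hi hj1 hj
    obtain ⟨w0, h0⟩ := skew' i j
    have h1 := L1 (ξ j) (D (ξ i))
    have h2a := L1 (ξ j) (ξ (i + 1))
    have h2b := L1 (ξ (i + 1)) (ξ j)
    have h3 := L1 (ξ (i + 1)) (D (ξ (j - 1)))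
    have hr1 := hrec (i + 1) (by omega) (by omega)
    have hr2 := hrec j hj1 (by omega)
    rw [Nat.add_sub_cancel, hH (ξ i)] at hr1
    rw [hH (ξ (j - 1))] at hr2
    refine ⟨w0 + S.symm (ξ j) * D (ξ i) - S.symm (ξ j) * ξ (i + 1)
        - S.symm (ξ (i + 1)) * ξ j + S.symm (ξ (i + 1)) * D (ξ (j - 1)), ?_⟩
    simp only [map_add, map_sub, hp]
    linear_combination h0 + h1 - h2a - h2b + h3 - ξ j * hr1 - ξ (i + 1) * hr2
  have chain : ∀ k : ℕ, k ≤ m → ∃ v : V, S v - v = p 0 m - p k (m - k) := by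
    intro k
    induction k with
    | zero => intro _; exact ⟨0, by simp⟩
    | succ k ih =>
      intro hk
      obtain ⟨v, hv⟩ := ih (by omega)
      obtain ⟨u, hu⟩ := step k (m - k) (by omega) (by omega) (by omega)
      have hmk : m - k - 1 = m - (k + 1) := by omega
      rw [hmk] at hu
      refine ⟨v + u, ?_⟩
      simp only [map_add]
      linear_combination hv + hu
  obtain ⟨v, hv⟩ := chain m le_rfl
  rw [Nat.sub_self] at hv
  obtain ⟨w, hw⟩ := skew' 0 m
  set c : V := algebraMap F V (1 / 2) with hc
  have hSc : S c = c := S.commutes _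
  have hSc' : S.symm c = c := S.symm.commutes _
  have h2c : c + c = 1 := by
    rw [hc, ← map_add, ← map_one (algebraMap F V)]
    norm_num
  have hp0m : p 0 m = D (ξ m) := by
    simp only [hp, hξ0, ← hc, hSc', h2c, one_mul]
  have key : S (c * (v + w)) - c * (v + w) = D (ξ m) := by
    rw [map_mul, hSc]
    have h2 : S (v + w) - (v + w) = (c + c) * (2 * D (ξ m)) := by
      rw [h2c, one_mul]
      simp only [map_add]
      linear_combination hv + hw + 2 * hp0m
    linear_combination c * h2 + (2 * c * D (ξ m) + D (ξ m)) * h2c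
  refine ⟨S (c * (v + w)), ?_⟩
  rw [AlgEquiv.symm_apply_apply, hH (ξ m), ← key, map_sub]
  ring
end

section
/- Generalized Lenard–Magri lemma: let F be a field of characteristic 0, V a commutative associative unital F-algebra with an F-algebra automorphism S, g ∈ V an invertible element, and D : V → V any map. Define H(f) := g·(S(D(f)) + D(f)) and K(f) := g·(S(g·f) − S^{−1}(g·f)) (i.e. H = g(S+1)∘D and K = g(S − S^{−1})∘g). Assume f·H(h) + h·H(f) ∈ (S − id)(V) for all f, h ∈ V. Then there exists an infinite sequence (ξ_j)_{j≥0} in V with ξ₀ = (2g)^{−1} and K(ξ_j) = H(ξ_{j−1}) for all j ≥ 1. -/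
/-- generalized Lenard–Magri lemma.  Let `V` be a commutative associative
unital `F`-algebra (char `F = 0`) with automorphism `S`, `g ∈ V` invertible, `D : V → V`
any map, `H(f) = g·(S(D f) + D f)` (i.e. `H = g(S+1)∘D`) and
`K(f) = g·(S(g·f) − S⁻¹(g·f))` (i.e. `K = g(S − S⁻¹)∘g`).  If
`f·H(h) + h·H(f) ∈ (S − id)(V)` for all `f,h`, then there is an infinite sequence
`(ξ_j)_{j≥0}` with `ξ₀ = (2g)⁻¹` and `K(ξ_j) = H(ξ_{j−1})` for all `j ≥ 1`. -/
theorem stmt_12 (F : Type*) [Field F] [CharZero F]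
    (V : Type*) [CommRing V] [Algebra F V]
    (S : V ≃ₐ[F] V) (g : V) (hg : IsUnit g) (D : V → V)
    (H : V → V) (hH : ∀ f : V, H f = g * (S (D f) + D f))
    (K : V → V) (hK : ∀ f : V, K f = g * (S (g * f) - S.symm (g * f)))
    (skew : ∀ f h : V, ∃ v : V, S v - v = f * H h + h * H f) :
    ∃ ξ : ℕ → V, ξ 0 * (2 * g) = 1 ∧ ∀ j : ℕ, 1 ≤ j → K (ξ j) = H (ξ (j - 1)) := by
  classical
  set half : V := algebraMap F V (2⁻¹ : F) with hhalf
  have h2 : half * 2 = 1 := by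
    rw [hhalf, ← map_ofNat (algebraMap F V) 2, ← map_mul, ← map_one (algebraMap F V)]
    norm_num
  have hgu : g * ↑hg.unit⁻¹ = 1 := by
    exact hg.mul_val_inv
  have hSh : S half = half := by rw [hhalf]; exact S.commutes _
  have hS'h : S.symm half = half := by rw [hhalf]; exact S.symm.commutes _
  -- the recursion step
  let step : V → V := fun x =>
    if h1 : ∃ w, S w - w = S (D x) + D x then half * ↑hg.unit⁻¹ * (D x + h1.choose) else 0
  let ξ : ℕ → V := fun n => Nat.rec (half * ↑hg.unit⁻¹) (fun _ x => step x) n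
  have hξ0 : ξ 0 = half * ↑hg.unit⁻¹ := rfl
  have hξs : ∀ m, ξ (m + 1) = step (ξ m) := fun _ => rfl
  -- K is skew mod (S-1)V
  have skewK : ∀ f h : V, ∃ v, S v - v = f * K h + h * K f := by
    intro f h
    refine ⟨g * f * S.symm (g * h) + g * h * S.symm (g * f), ?_⟩
    simp only [hK, map_add, map_mul, map_sub, AlgEquiv.apply_symm_apply]
    ring
  -- shift lemma
  have shift : ∀ a b c d : V, K b = H a → K d = H c →
      ∃ v, S v - v = b * H c - a * H d := by
    intro a b c d h1 h2'
    obtain ⟨v1, hv1⟩ := skewK d b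
    obtain ⟨v2, hv2⟩ := skew d a
    rw [h1, h2'] at hv1
    exact ⟨v1 - v2, by rw [map_sub]; linear_combination hv1 - hv2⟩
  -- key computation: solving K (step x) = H x
  have key : ∀ x : V, (∃ w, S w - w = S (D x) + D x) → K (step x) = H x := by
    intro x hex
    have hstep : step x = half * ↑hg.unit⁻¹ * (D x + hex.choose) := by
      show (if h1 : ∃ w, S w - w = S (D x) + D x
          then half * ↑hg.unit⁻¹ * (D x + h1.choose) else 0) = _
      rw [dif_pos hex]
    have hw : S hex.choose - hex.choose = S (D x) + D x := hex.choose_spec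
    have hw2 : hex.choose - S.symm hex.choose = D x + S.symm (D x) := by
      have := congrArg S.symm hw
      simpa [map_sub, map_add] using this
    rw [hK, hH, hstep]
    have hc : g * (half * ↑hg.unit⁻¹ * (D x + hex.choose)) = half * (D x + hex.choose) := by
      linear_combination (half * (D x + hex.choose)) * hgu
    rw [hc]
    simp only [map_add, map_mul, hSh, hS'h]
    linear_combination g * half * hw + g * half * hw2 + g * (S (D x) + D x) * h2
  -- main induction
  have main : ∀ n, K (ξ (n + 1)) = H (ξ n) := by
    intro n
    induction n using Nat.strong_induction_on with
    | _ n ih =>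
      have tel : ∀ k, k ≤ n → ∃ v, S v - v = ξ (n - k) * H (ξ k) - ξ n * H (ξ 0) := by
        intro k
        induction k with
        | zero => intro _; exact ⟨0, by simp⟩
        | succ k ihk =>
          intro hk
          obtain ⟨v, hv⟩ := ihk (by omega)
          have e1 : K (ξ (n - k)) = H (ξ (n - (k + 1))) := by
            have hnk : n - k = (n - (k + 1)) + 1 := by omega
            rw [hnk]
            exact ih (n - (k + 1)) (by omega)
          have e2 : K (ξ (k + 1)) = H (ξ k) := ih k (by omega)
          obtain ⟨v2, hv2⟩ := shift (ξ (n - (k + 1))) (ξ (n - k)) (ξ k) (ξ (k + 1)) e1 e2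
          exact ⟨v - v2, by rw [map_sub]; linear_combination hv - hv2⟩
      obtain ⟨v, hv⟩ := tel n le_rfl
      rw [Nat.sub_self] at hv
      obtain ⟨v2, hv2⟩ := skew (ξ 0) (ξ n)
      have hx0H : ξ 0 * H (ξ n) = half * (S (D (ξ n)) + D (ξ n)) := by
        rw [hH, hξ0]
        linear_combination (half * (S (D (ξ n)) + D (ξ n))) * hgu
      have hex : ∃ w, S w - w = S (D (ξ n)) + D (ξ n) := by
        refine ⟨v + v2, ?_⟩
        rw [map_add]
        linear_combination hv + hv2 + 2 * hx0H + (S (D (ξ n)) + D (ξ n)) * h2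
      rw [hξs n]
      exact key (ξ n) hex
  refine ⟨ξ, ?_, ?_⟩
  · rw [hξ0]
    linear_combination (half * 2) * hgu + h2
  · intro j hj
    obtain ⟨m, rfl⟩ : ∃ m, j = m + 1 := ⟨j - 1, by omega⟩
    simpa using main m
end

section
/- Uniqueness of the second compatible multiplicative Poisson structure for W₂: let F be a field of characteristic 0 and c : ℤ → F. Consider the equation (E): for all a, b, k ∈ ℤ, (δ_{a,1} − δ_{a,−1})·δ_{b,k}·c(k) − (δ_{b,1} − δ_{b,−1})·δ_{a,k}·c(k) + δ_{k,0}·( c(b)·(δ_{a,b+1} − δ_{a,b−1}) − c(a)·(δ_{b,a+1} − δ_{b,a−1}) ) = c(k−1)·(δ_{b,1}·δ_{a,k} − δ_{a,1}·δ_{b,k}) + c(k+1)·(δ_{a,−1}·δ_{b,k} − δ_{b,−1}·δ_{a,k}). Then c satisfies both c(−k) = −c(k) for all k ∈ ℤ and (E) if and only if there exists α ∈ F such that c(k) = α·(−1)^k for all k ≥ 1, c(0) = 0, and c(−k) = −c(k) for all k. (Thus, up to a constant factor, the unique solution is r(λ) = ∑_{n≥1} (−1)ⁿ(λⁿ − λ^{−n}).)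 -/
/-!
Put `s(k) = c(k) + c(k+1)`. Expressing `c(k ± 1)` through `s` and `c(k)` cancels every other
occurrence of `c` in (E), so (E) only involves `s`. At `(a, b, k) = (-1, n, n)` it reads
`s(n) = 0` whenever `n ∉ {0, -1}`, which makes `c` alternate on the positive integers.
Conversely, an odd `c` alternating on the positive integers has `s = c(1)·(δ_{·,0} - δ_{·,-1})`,
and (E) becomes an identity between Kronecker deltas.
-/

/-- The Kronecker delta `δ_{a,b}` with values in `F`. -/
def kdelta (F : Type*) [Zero F] [One F] (a b : ℤ) : F := if a = b then 1 else 0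

section

variable {F : Type*}

/-- Equation (E). -/
def IsCompatible [Ring F] (c : ℤ → F) : Prop :=
  ∀ a b k : ℤ,
    (kdelta F a 1 - kdelta F a (-1)) * kdelta F b k * c k
      - (kdelta F b 1 - kdelta F b (-1)) * kdelta F a k * c k
      + kdelta F k 0 *
          (c b * (kdelta F a (b + 1) - kdelta F a (b - 1))
            - c a * (kdelta F b (a + 1) - kdelta F b (a - 1)))
    = c (k - 1) * (kdelta F b 1 * kdelta F a k - kdelta F a 1 * kdelta F b k)
      + c (k + 1) * (kdelta F a (-1) * kdelta F b k - kdelta F b (-1) * kdelta F a k)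

def adjSum [Add F] (c : ℤ → F) (k : ℤ) : F := c k + c (k + 1)

theorem kdelta_sub_one [Zero F] [One F] (a b : ℤ) : kdelta F a (b - 1) = kdelta F b (a + 1) := by
  simp only [kdelta]
  congr 1
  exact propext (by omega)

theorem kdelta_mul_apply [MulZeroOneClass F] (f : ℤ → F) (a b : ℤ) :
    kdelta F a b * f a = kdelta F a b * f b := by
  by_cases h : a = b <;> simp [kdelta, h]

section CommRing

variable [CommRing F] {c : ℤ → F}

theorem shift_terms_eq_adjSum (a b : ℤ) :
    c b * (kdelta F a (b + 1) - kdelta F a (b - 1)) - c a * (kdelta F b (a + 1) - kdelta F b (a - 1))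
      = kdelta F a (b + 1) * adjSum c b - kdelta F b (a + 1) * adjSum c a := by
  have ha := kdelta_mul_apply c a (b + 1)
  have hb := kdelta_mul_apply c b (a + 1)
  rw [kdelta_sub_one, kdelta_sub_one, adjSum, adjSum]
  linear_combination ha - hb

theorem isCompatible_iff_adjSum :
    IsCompatible c ↔ ∀ a b k : ℤ,
      kdelta F k 0 * (kdelta F a (b + 1) * adjSum c b - kdelta F b (a + 1) * adjSum c a)
      = adjSum c (k - 1) * (kdelta F b 1 * kdelta F a k - kdelta F a 1 * kdelta F b k)
        + adjSum c k * (kdelta F a (-1) * kdelta F b k - kdelta F b (-1) * kdelta F a k) := by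
  refine forall₃_congr fun a b k => ?_
  rw [shift_terms_eq_adjSum]
  simp only [adjSum, sub_add_cancel]
  constructor <;> intro h <;> linear_combination h

theorem adjSum_eq_zero_of_isCompatible (h : IsCompatible c) {n : ℤ} (hn0 : n ≠ 0)
    (hn1 : n ≠ -1) : adjSum c n = 0 := by
  simpa [kdelta, hn0, hn1, hn1.symm] using (isCompatible_iff_adjSum.1 h (-1) n n).symm

theorem isCompatible_of_adjSum_eq (β : F)
    (hs : ∀ m, adjSum c m = β * (kdelta F m 0 - kdelta F m (-1))) : IsCompatible c := by
  rw [isCompatible_iff_adjSum]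
  intro a b k
  simp only [hs]
  unfold kdelta
  grind (splits := 40)

theorem adjSum_neg_sub_one (hodd : ∀ k, c (-k) = -c k) (m : ℤ) :
    adjSum c (-m - 1) = -adjSum c m := by
  rw [adjSum, adjSum, show -m - 1 + 1 = -m by ring, show -m - 1 = -(m + 1) by ring, hodd, hodd]
  ring

theorem adjSum_eq_of_odd (hodd : ∀ k, c (-k) = -c k) (h0 : c 0 = 0)
    (hpos : ∀ n, 1 ≤ n → adjSum c n = 0) (m : ℤ) :
    adjSum c m = c 1 * (kdelta F m 0 - kdelta F m (-1)) := by
  obtain hm | rfl | rfl | hm : 1 ≤ m ∨ m = 0 ∨ m = -1 ∨ m ≤ -2 := by omega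
  · simp [kdelta, hpos m hm, show m ≠ 0 by omega, show m ≠ -1 by omega]
  · simp [kdelta, adjSum, h0]
  · simp [kdelta, adjSum, h0, hodd 1]
  · rw [← neg_neg (adjSum c m), ← adjSum_neg_sub_one hodd, hpos _ (by omega)]
    simp [kdelta, show m ≠ 0 by omega, show m ≠ -1 by omega]

end CommRing

theorem adjSum_eq_zero_of_alternating [DivisionRing F] {c : ℤ → F} {α : F}
    (hpos : ∀ k, 1 ≤ k → c k = α * (-1) ^ k) {n : ℤ} (hn : 1 ≤ n) : adjSum c n = 0 := by
  rw [adjSum, hpos n hn, hpos (n + 1) (by omega), zpow_add_one₀ (by norm_num),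
    mul_neg_one, mul_neg, add_neg_cancel]

theorem eq_neg_mul_neg_one_zpow_of_adjSum_eq_zero [DivisionRing F] {c : ℤ → F}
    (h : ∀ n, 1 ≤ n → adjSum c n = 0) {k : ℤ} (hk : 1 ≤ k) : c k = -c 1 * (-1) ^ k := by
  induction k, hk using Int.leInduction with
  | base => simp
  | succ n hn ih =>
    rw [zpow_add_one₀ (by norm_num), ← mul_assoc, ← ih, mul_neg_one]
    exact eq_neg_of_add_eq_zero_right (h n hn)

end

/-- uniqueness of the second compatible multiplicative Poisson structure for
`W₂`.  A function `c : ℤ → F` satisfies both `c(−k) = −c(k)` for all `k` and the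
compatibility equation (E) (the coefficient form of
`p(λ)r(μS) − p(μ)r(λS) + (p(λ)−p(μ))r(λμ) = p(λμS)(r(λS) − r(μS))` for
`p(λ) = λ − λ⁻¹`, `r(λ) = ∑_k c(k)λᵏ`) if and only if there is `α ∈ F` with
`c(k) = α·(−1)ᵏ` for all `k ≥ 1`, `c(0) = 0`, and `c(−k) = −c(k)` for all `k`. -/
theorem stmt_14 (F : Type*) [Field F] [CharZero F] (c : ℤ → F) :
    ((∀ k : ℤ, c (-k) = -c k) ∧
      (∀ a b k : ℤ,
        (kdelta F a 1 - kdelta F a (-1)) * kdelta F b k * c k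
          - (kdelta F b 1 - kdelta F b (-1)) * kdelta F a k * c k
          + kdelta F k 0 *
              (c b * (kdelta F a (b + 1) - kdelta F a (b - 1))
                - c a * (kdelta F b (a + 1) - kdelta F b (a - 1)))
        = c (k - 1) * (kdelta F b 1 * kdelta F a k - kdelta F a 1 * kdelta F b k)
          + c (k + 1) * (kdelta F a (-1) * kdelta F b k - kdelta F b (-1) * kdelta F a k)))
    ↔ ∃ α : F,
        (∀ k : ℤ, 1 ≤ k → c k = α * (-1) ^ k)
        ∧ c 0 = 0
        ∧ (∀ k : ℤ, c (-k) = -c k) := by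
  constructor
  · rintro ⟨hodd, hE⟩
    have hpos n (hn : 1 ≤ n) : adjSum c n = 0 :=
      adjSum_eq_zero_of_isCompatible hE (by omega) (by omega)
    exact ⟨-c 1, fun _ => eq_neg_mul_neg_one_zpow_of_adjSum_eq_zero hpos,
      self_eq_neg.mp (by simpa using hodd 0), hodd⟩
  · rintro ⟨α, hpos, h0, hodd⟩
    exact ⟨hodd, isCompatible_of_adjSum_eq _
      (adjSum_eq_of_odd hodd h0 fun _ => adjSum_eq_zero_of_alternating hpos)⟩
end

section
/- Residue lemma for pseudodifference operators: let V be a commutative associative unital algebra over a field F with an F-algebra automorphism S, and let a, b : ℤ → V have supports bounded above (the coefficient families of pseudodifference operators A(S) = ∑_n a_n Sⁿ and B(S) = ∑_n b_n Sⁿ in V((S^{−1}))). Then: (a) for every k ∈ ℤ, the λ^k-coefficient of Res_z(A(z)·B*(λ/z)) equals the λ^k-coefficient of Res_z(A(zλS)·B(z)), both being a_k·S^k(b_{−k}); (b) ∑_{n∈ℤ} a_{−n}·S^{−n}(b_n) − ∑_{n∈ℤ} b_{−n}·S^{−n}(a_n) ∈ (S − id)(V), where both sums are finite; that is, ∫ Res_z(A(zS)B(z))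 = ∫ Res_z(B(zS)A(z)) in V/(S − id)(V). -/
/-!
Part (a) is bookkeeping: each condition singles out the index `(k, -k)`.

For (b), put `tₙ = a₋ₙ · S⁻ⁿ(bₙ)`, which vanishes for all but finitely many `n` because both
supports are bounded above. Applying `Sⁿ` to `tₙ` and substituting `n ↦ -n` gives the summands
of the second sum, so the difference is `∑ₙ (tₙ - Sⁿ tₙ)`; and `y - Sⁿ y` lies in the range of
`S - id` for every `y` and every `n`, because the automorphisms acting trivially on
`V ⧸ (S - id)(V)` form a subgroup containing `S`.
-/

open Function

theorem finsum_ite_of_forall_iff_eq {α M : Type*} [AddCommMonoid M] {P : α → Prop}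
    [DecidablePred P] {x₀ : α} (hP : ∀ x, P x ↔ x = x₀) (f : α → M) :
    ∑ᶠ x, (if P x then f x else 0) = f x₀ := by
  rw [finsum_eq_single _ x₀ fun x hx => if_neg ((hP x).not.mpr hx), if_pos ((hP x₀).mpr rfl)]

theorem hasFiniteSupport_mul_comp_neg {M : Type*} [MulZeroClass M] {f g : ℤ → M}
    (hf : ∃ N : ℤ, ∀ n : ℤ, N < n → f n = 0) (hg : ∃ N : ℤ, ∀ n : ℤ, N < n → g n = 0) :
    HasFiniteSupport fun n => f (-n) * g n := by
  obtain ⟨Nf, hNf⟩ := hf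
  obtain ⟨Ng, hNg⟩ := hg
  refine (Set.finite_Icc (-Nf) Ng).subset fun n hn => ⟨?_, ?_⟩ <;> by_contra h <;> apply hn
  · simp [hNf (-n) (by omega)]
  · simp [hNg n (by omega)]

namespace AlgEquiv

variable {R A : Type*} [CommRing R] [Ring A] [Algebra R A] (S : A ≃ₐ[R] A)

def trivialOnCoinvariants : Subgroup (A ≃ₐ[R] A) where
  carrier := {g | ∀ y, y - g y ∈ LinearMap.range (S.toLinearMap - LinearMap.id)}
  one_mem' y := by simp
  mul_mem' {g h} hg hh y := by
    simpa using Submodule.add_mem _ (hh y) (hg (h y))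
  inv_mem' {g} hg y := by
    simpa using Submodule.neg_mem _ (hg (g⁻¹ y))

theorem sub_zpow_apply_mem_range (n : ℤ) (y : A) :
    y - (S ^ n) y ∈ LinearMap.range (S.toLinearMap - LinearMap.id) := by
  have hS : S ∈ S.trivialOnCoinvariants := fun y => ⟨-y, by simp [neg_add_eq_sub]⟩
  exact Subgroup.zpowers_le.mpr hS (Subgroup.zpow_mem_zpowers S n) y

theorem finsum_sub_finsum_zpow_apply_mem_range {t : ℤ → A} (ht : HasFiniteSupport t) :
    ∑ᶠ n, t n - ∑ᶠ n, (S ^ n) (t n) ∈ LinearMap.range (S.toLinearMap - LinearMap.id) := by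
  have hSt : HasFiniteSupport fun n => (S ^ n) (t n) :=
    ht.subset fun n hn h => hn (by simp [h])
  rw [← finsum_sub_distrib ht hSt]
  exact finsum_induction _ (Submodule.zero_mem _) (fun _ _ => Submodule.add_mem _)
    fun n => S.sub_zpow_apply_mem_range n (t n)

end AlgEquiv

/-- residue lemma for pseudodifference operators.  Let `V` be a commutative
associative unital `F`-algebra with automorphism `S`, and `a, b : ℤ → V` coefficient
families with supports bounded above (pseudodifference operators `A(S) = ∑ aₙ Sⁿ`,
`B(S) = ∑ bₙ Sⁿ` in `V((S⁻¹))`).  Then: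
(a) for every `k ∈ ℤ`, the `λᵏ`-coefficients of `Res_z (A(z)·B*(λ/z))` and of
`Res_z (A(zλS)·B(z))` (written as convolution sums) both equal `a_k · Sᵏ(b_{−k})`;
(b) `∑_n a_{−n}·S^{−n}(b_n) − ∑_n b_{−n}·S^{−n}(a_n) ∈ (S − id)(V)`, i.e.
`∫ Res_z A(zS)B(z) = ∫ Res_z B(zS)A(z)`. -/
theorem stmt_15 (F : Type*) [Field F] (V : Type*) [CommRing V] [Algebra F V]
    (S : V ≃ₐ[F] V) (a b : ℤ → V)
    (ha : ∃ N : ℤ, ∀ n : ℤ, N < n → a n = 0)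
    (hb : ∃ N : ℤ, ∀ n : ℤ, N < n → b n = 0) :
    (∀ k : ℤ,
      (∑ᶠ p : ℤ × ℤ,
          if p.1 + p.2 = 0 ∧ -p.2 = k then a p.1 * (S ^ (-p.2)) (b p.2) else 0)
        = a k * (S ^ k) (b (-k))
      ∧ (∑ᶠ p : ℤ × ℤ,
          if p.1 + p.2 = 0 ∧ p.1 = k then a p.1 * (S ^ p.1) (b p.2) else 0)
        = a k * (S ^ k) (b (-k)))
    ∧ (∃ v : V, S v - v
        = (∑ᶠ n : ℤ, a (-n) * (S ^ (-n)) (b n))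
          - ∑ᶠ n : ℤ, b (-n) * (S ^ (-n)) (a n)) := by
  refine ⟨fun k => ⟨?_, ?_⟩, ?_⟩
  · rw [finsum_ite_of_forall_iff_eq (x₀ := (k, -k)) fun p => by grind, neg_neg]
  · rw [finsum_ite_of_forall_iff_eq (x₀ := (k, -k)) fun p => by grind]
  · have ht : HasFiniteSupport fun n => a (-n) * (S ^ (-n)) (b n) :=
      hasFiniteSupport_mul_comp_neg ha (hb.imp fun N hN n hn => by simp [hN n hn])
    have hreindex : ∑ᶠ n, (S ^ n) (a (-n) * (S ^ (-n)) (b n))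
        = ∑ᶠ n, b (-n) * (S ^ (-n)) (a n) := by
      rw [← finsum_comp_equiv (Equiv.neg ℤ)]
      refine finsum_congr fun n => ?_
      rw [Equiv.neg_apply, neg_neg, map_mul, ← AlgEquiv.mul_apply, ← zpow_add, neg_add_cancel,
        zpow_zero, AlgEquiv.one_apply, mul_comm]
    obtain ⟨v, hv⟩ := hreindex ▸ S.finsum_sub_finsum_zpow_apply_mem_range ht
    exact ⟨v, by simpa using hv⟩
end

section
/- Nonexistence of difference-polynomial solutions of (S − a)f = p(u): let F be a field of characteristic 0, V = F[u_n : n ∈ ℤ] the polynomial ring in the variables u_n (the algebra of difference polynomials in one variable), and S the F-algebra automorphism of V with S(u_n) = u_{n+1}. Let a ∈ F with a ≠ 0, and let p ∈ F[X] be a univariate polynomial whose derivative p′ is nonzero. Then there is no f ∈ V such that S(f) − a·f = p(u₀). -/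
open MvPolynomial

lemma pd_aeval_X0 {F : Type*} [CommRing F] (n : ℤ) (p : Polynomial F) :
    MvPolynomial.pderiv n (Polynomial.aeval (MvPolynomial.X (0 : ℤ) : MvPolynomial ℤ F) p)
      = Polynomial.aeval (MvPolynomial.X (0 : ℤ) : MvPolynomial ℤ F) p.derivative
        * MvPolynomial.pderiv n (MvPolynomial.X (0 : ℤ)) := by
  induction p using Polynomial.induction_on with
  | C c => simp
  | add p q hp hq => simp [hp, hq, add_mul]
  | monomial k c h =>
      simp only [map_mul, Polynomial.aeval_C, Polynomial.aeval_X_pow, Polynomial.derivative_mul,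
        Polynomial.derivative_C, Polynomial.derivative_X_pow, zero_mul, zero_add, map_pow,
        map_natCast, Polynomial.aeval_X]
      rw [MvPolynomial.algebraMap_eq, MvPolynomial.pderiv_C_mul (a := c), MvPolynomial.pderiv_pow]
      push_cast
      ring

/-- nonexistence of difference-polynomial solutions of `(S − a)f = p(u)`.
Let `V = F[u_n : n ∈ ℤ]` (char `F = 0`) with the shift automorphism `S(u_n) = u_{n+1}`
(realized as renaming of variables along `n ↦ n + 1`), `a ∈ F` nonzero, and `p ∈ F[X]`
with `p′ ≠ 0`.  Then no `f ∈ V` satisfies `S(f) − a·f = p(u₀)`. -/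
theorem stmt_16 (F : Type*) [Field F] [CharZero F] (a : F) (ha : a ≠ 0)
    (p : Polynomial F) (hp : p.derivative ≠ 0) :
    ¬ ∃ f : MvPolynomial ℤ F,
        (MvPolynomial.renameEquiv F (Equiv.addRight (1 : ℤ))) f - MvPolynomial.C a * f
          = Polynomial.aeval (MvPolynomial.X (0 : ℤ)) p := by
  rintro ⟨f, hf⟩
  set σ : ℤ → ℤ := fun n => n + 1 with hσdef
  have hσ : Function.Injective σ := fun x y h => by simpa [hσdef] using h
  have hf' : MvPolynomial.rename σ f - MvPolynomial.C a * f
      = Polynomial.aeval (MvPolynomial.X (0 : ℤ)) p := by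
    simpa [MvPolynomial.renameEquiv_apply, hσdef] using hf
  -- differentiate the equation
  have hD : ∀ n : ℤ, MvPolynomial.rename σ (MvPolynomial.pderiv (n - 1) f)
      - MvPolynomial.C a * MvPolynomial.pderiv n f
      = Polynomial.aeval (MvPolynomial.X (0 : ℤ)) p.derivative
        * MvPolynomial.pderiv n (MvPolynomial.X (0 : ℤ) : MvPolynomial ℤ F) := by
    intro n
    have h := congrArg (MvPolynomial.pderiv n) hf'
    rw [map_sub, MvPolynomial.pderiv_C_mul, pd_aeval_X0] at h
    have hr : MvPolynomial.pderiv n (MvPolynomial.rename σ f)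
        = MvPolynomial.rename σ (MvPolynomial.pderiv (n - 1) f) := by
      have := MvPolynomial.pderiv_rename hσ (n - 1) f
      have hn : σ (n - 1) = n := by simp [hσdef]
      rwa [hn] at this
    rwa [hr] at h
  -- propagation of nonvanishing of partial derivatives away from 0
  have hrename_inj : Function.Injective (MvPolynomial.rename (R := F) σ) :=
    MvPolynomial.rename_injective σ hσ
  have hstep : ∀ m : ℤ, m ≠ 0 →
      (MvPolynomial.pderiv (m - 1) f = 0 ↔ MvPolynomial.pderiv m f = 0) := by
    intro m hm
    have h := hD m
    rw [MvPolynomial.pderiv_X_of_ne (by exact fun h0 => hm h0.symm), mul_zero,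
      sub_eq_zero] at h
    constructor
    · intro h0
      rw [h0, map_zero] at h
      rcases mul_eq_zero.mp h.symm with hh | hh
      · exact absurd (by simpa using hh) ha
      · exact hh
    · intro h0
      rw [h0, mul_zero] at h
      have := hrename_inj (a₂ := 0) (by simpa using h)
      exact this
  -- all partial derivatives vanish
  have hzero : ∀ n : ℤ, MvPolynomial.pderiv n f = 0 := by
    by_contra hcon
    push_neg at hcon
    obtain ⟨n, hn⟩ := hcon
    have hmem : ∀ m : ℤ, MvPolynomial.pderiv m f ≠ 0 → m ∈ f.vars := by
      intro m hm
      by_contra hmm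
      exact hm (MvPolynomial.pderiv_eq_zero_of_notMem_vars hmm)
    rcases le_or_gt 0 n with hn0 | hn0
    · -- propagate upward
      have up : ∀ k : ℕ, MvPolynomial.pderiv (n + k) f ≠ 0 := by
        intro k
        induction k with
        | zero => simpa using hn
        | succ k ih =>
            have hne : (n + (k + 1) : ℤ) ≠ 0 := by positivity
            have := (hstep (n + (k + 1)) hne).not
            push_cast at this ⊢
            have harg : (n + (k + 1) : ℤ) - 1 = n + k := by ring
            rw [harg] at this
            exact this.mp ih
      have : (↑f.vars : Set ℤ).Infinite :=
        Set.infinite_of_injective_forall_mem (f := fun k : ℕ => n + (k : ℤ))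
          (fun x y h => by simpa using h) (fun k => hmem _ (up k))
      exact this f.vars.finite_toSet
    · -- propagate downward
      have down : ∀ k : ℕ, MvPolynomial.pderiv (n - k) f ≠ 0 := by
        intro k
        induction k with
        | zero => simpa using hn
        | succ k ih =>
            have hne : (n - k : ℤ) ≠ 0 := by
              have : (n - k : ℤ) < 0 := by
                have : (0 : ℤ) ≤ k := Int.ofNat_nonneg k
                omega
              omega
            have := (hstep (n - k) hne).not
            have harg : (n - k : ℤ) - 1 = n - (k + 1) := by ring
            rw [harg] at this
            have := this.mpr ih
            push_cast at this ⊢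
            convert this using 2
      have : (↑f.vars : Set ℤ).Infinite :=
        Set.infinite_of_injective_forall_mem (f := fun k : ℕ => n - (k : ℤ))
          (fun x y h => by simp only [sub_right_inj, Int.natCast_inj] at h; exact h)
          (fun k => hmem _ (down k))
      exact this f.vars.finite_toSet
  -- conclude: p' evaluated at X 0 is zero, contradiction
  have h0 := hD 0
  rw [hzero, hzero, map_zero, mul_zero, sub_zero, MvPolynomial.pderiv_X_self, mul_one] at h0
  have : p.derivative = 0 := by
    have h := congrArg (MvPolynomial.aeval (fun _ : ℤ => (Polynomial.X : Polynomial F))) h0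
    rw [map_zero, ← Polynomial.aeval_algHom_apply] at h
    simpa using h.symm
  exact hp this
end
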